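/- Let w₁, w₂ ∈ ℤ be positive integers, let v ∈ ℤ≥0 satisfy v ≥ min{ w₁ mod w₂, w₂ mod w₁ }, and let u ∈ ℤ² be a primitive vector. Then there exist lattice polytopes P, Q in ℝ² such that w_u(P) = w₁, w_u(Q) = w₂, and V(P,Q) = v. Here m mod n denotes the remainder of m upon division by n. -/

import Mathlib

open MeasureTheory Pointwise

/-- Normalized mixed area of two compact convex sets in ℝ². -/
noncomputable def mixedArea (P Q : Set (ℝ × ℝ)) : ℝ :=
  (volume (P + Q)).toReal - (volume P).toReal - (volume Q).toReal

/-- Embedding of ℤ² into ℝ². -/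
def latticeEmbed (p : ℤ × ℤ) : ℝ × ℝ := ((p.1 : ℝ), (p.2 : ℝ))

/-- A lattice polytope in ℝ² is the convex hull of a finite nonempty set of lattice points. -/
def IsLatticePolytope (P : Set (ℝ × ℝ)) : Prop :=
  ∃ S : Finset (ℤ × ℤ), S.Nonempty ∧ P = convexHull ℝ (latticeEmbed '' (S : Set (ℤ × ℤ)))

/-- The (lattice) width of a set `K ⊆ ℝ²` in the direction `u ∈ ℤ²`. -/
noncomputable def latticeWidth (u : ℤ × ℤ) (K : Set (ℝ × ℝ)) : ℝ :=
  sSup ((fun x : ℝ × ℝ => x.1 * u.1 + x.2 * u.2) '' K) -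
    sInf ((fun x : ℝ × ℝ => x.1 * u.1 + x.2 * u.2) '' K)

/-!
Lattice widths and mixed areas are invariant under unimodular maps, so we may take `u = (1, -w₁)`.
The mixed area of the vertical unit segment with a compact convex set `K` is the horizontal width
of `K`: adding the segment lengthens every nonempty vertical slice of `K` by one (Cavalieri). The
vertical unit segment has width `w₁` in direction `(1, -w₁)`. Writing `w₂ = k w₁ + r` with `k ≥ 1`
and `r = w₂ mod w₁`, the triangle `conv {(r, 0), (0, k), (v, m)}` with `m = ⌊v / w₁⌋ + 1` has
width `w₂` in that direction, and horizontal width `v` because `v ≥ r`. The case `w₁ > w₂`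
follows by symmetry.
-/

open Set

theorem Set.Icc_add_Icc_eq {α : Type*} [AddCommGroup α] [LinearOrder α] [IsOrderedAddMonoid α]
    {a b c d : α} (hab : a ≤ b) (hcd : c ≤ d) : Icc a b + Icc c d = Icc (a + c) (b + d) := by
  refine (Icc_add_Icc_subset a b c d).antisymm fun x ⟨hx₁, hx₂⟩ => ?_
  rcases le_total (x - c) b with h | h
  · exact ⟨x - c, ⟨by simpa [le_sub_iff_add_le] using hx₁, h⟩, c, ⟨le_rfl, hcd⟩,
      sub_add_cancel x c⟩
  · exact ⟨b, ⟨hab, le_rfl⟩, x - b, ⟨by simpa [le_sub_iff_add_le, add_comm] using h,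
      by simpa [sub_le_iff_le_add, add_comm] using hx₂⟩, add_sub_cancel b x⟩

theorem Real.volume_eq_ofReal_sSup_sub_sInf {I : Set ℝ} (hI : IsCompact I) (hconv : Convex ℝ I) :
    volume I = ENNReal.ofReal (sSup I - sInf I) := by
  rcases I.eq_empty_or_nonempty with rfl | hne
  · simp
  · conv_lhs => rw [eq_Icc_of_connected_compact ⟨hne, hconv.isPreconnected⟩ hI]
    exact Real.volume_Icc

theorem Real.volume_add_Icc_zero {I : Set ℝ} (hI : IsCompact I) (hconv : Convex ℝ I)
    (hne : I.Nonempty) {c : ℝ} (hc : 0 ≤ c) :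
    volume (I + Icc 0 c) = volume I + ENNReal.ofReal c := by
  have hle : sInf I ≤ sSup I := csInf_le_csSup hne hI.bddBelow hI.bddAbove
  rw [eq_Icc_of_connected_compact ⟨hne, hconv.isPreconnected⟩ hI, Set.Icc_add_Icc_eq hle hc,
    Real.volume_Icc, Real.volume_Icc, ← ENNReal.ofReal_add (sub_nonneg.2 hle) hc]
  congr 1; ring

theorem preimage_prodMk_add_singleton_prod {α β : Type*} [AddGroup α] [AddGroup β]
    (K : Set (α × β)) (T : Set β) (x : α) :
    Prod.mk x ⁻¹' (K + {0} ×ˢ T) = Prod.mk x ⁻¹' K + T := by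
  ext y
  simp only [mem_preimage, mem_add, mem_prod, mem_singleton_iff, Prod.exists]
  constructor
  · rintro ⟨a, b, hab, _, t, ⟨rfl, ht⟩, h⟩
    simp only [Prod.mk_add_mk, add_zero, Prod.mk.injEq] at h
    obtain ⟨rfl, rfl⟩ := h
    exact ⟨b, hab, t, ht, rfl⟩
  · rintro ⟨b, hb, t, ht, rfl⟩
    exact ⟨x, b, hb, 0, t, ⟨rfl, ht⟩, by simp⟩

theorem Convex.preimage_prodMk {𝕜 E F : Type*} [Semiring 𝕜] [PartialOrder 𝕜] [AddCommMonoid E]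
    [AddCommMonoid F] [Module 𝕜 E] [Module 𝕜 F] {K : Set (E × F)} (hK : Convex 𝕜 K) (x : E) :
    Convex 𝕜 (Prod.mk x ⁻¹' K) := by
  intro y hy z hz a b ha hb hab
  have := hK hy hz ha hb hab
  rwa [Prod.smul_mk, Prod.smul_mk, Prod.mk_add_mk, ← add_smul, hab, one_smul] at this

theorem volume_add_vertical_segment {K : Set (ℝ × ℝ)} (hK : IsCompact K) (hconv : Convex ℝ K)
    {c : ℝ} (hc : 0 ≤ c) :
    volume (K + {0} ×ˢ Icc 0 c) = volume K + ENNReal.ofReal c * volume (Prod.fst '' K) := by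
  have hfst : IsCompact (Prod.fst '' K) := hK.image continuous_fst
  have hslice : ∀ x, volume (Prod.mk x ⁻¹' (K + {0} ×ˢ Icc 0 c)) =
      volume (Prod.mk x ⁻¹' K) + (Prod.fst '' K).indicator (fun _ => ENNReal.ofReal c) x := by
    intro x
    rw [preimage_prodMk_add_singleton_prod]
    by_cases hx : x ∈ Prod.fst '' K
    · have hne : (Prod.mk x ⁻¹' K).Nonempty := by
        obtain ⟨⟨_, y⟩, hy, rfl⟩ := hx; exact ⟨y, hy⟩
      have hcpt : IsCompact (Prod.mk x ⁻¹' K) :=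
        (hK.image continuous_snd).of_isClosed_subset
          (hK.isClosed.preimage (Continuous.prodMk_right x)) fun y hy => ⟨(x, y), hy, rfl⟩
      rw [indicator_of_mem hx, Real.volume_add_Icc_zero hcpt
        (hconv.preimage_prodMk x) hne hc]
    · have hempty : Prod.mk x ⁻¹' K = ∅ :=
        eq_empty_of_forall_notMem fun y hy => hx ⟨(x, y), hy, rfl⟩
      simp [hempty, indicator_of_notMem hx]
  have hsum : IsCompact (K + {0} ×ˢ Icc 0 c) := hK.add (isCompact_singleton.prod isCompact_Icc)
  rw [Measure.volume_eq_prod, Measure.prod_apply hsum.measurableSet,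
    Measure.prod_apply hK.measurableSet]
  simp_rw [hslice]
  rw [lintegral_add_right _ (measurable_const.indicator hfst.measurableSet),
    lintegral_indicator_const hfst.measurableSet]

theorem mixedArea_vertical_segment {K : Set (ℝ × ℝ)} (hK : IsCompact K) (hconv : Convex ℝ K)
    {c : ℝ} (hc : 0 ≤ c) :
    mixedArea ({0} ×ˢ Icc 0 c) K = c * latticeWidth (1, 0) K := by
  have hfst :
      volume (Prod.fst '' K) = ENNReal.ofReal (sSup (Prod.fst '' K) - sInf (Prod.fst '' K)) :=
    Real.volume_eq_ofReal_sSup_sub_sInf (hK.image continuous_fst)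
      (hconv.is_linear_image (LinearMap.fst ℝ ℝ ℝ).isLinear)
  have hsegment : volume ({(0 : ℝ)} ×ˢ Icc (0 : ℝ) c) = 0 := by
    rw [Measure.volume_eq_prod, Measure.prod_prod, Real.volume_singleton, zero_mul]
  have hwidth : latticeWidth (1, 0) K = sSup (Prod.fst '' K) - sInf (Prod.fst '' K) := by
    simp only [latticeWidth, Int.cast_one, Int.cast_zero, mul_one, mul_zero, add_zero]
  rw [mixedArea, add_comm, volume_add_vertical_segment hK hconv hc, hsegment, hfst,
    ENNReal.toReal_add hK.measure_lt_top.ne (by finiteness), ENNReal.toReal_mul,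
    ENNReal.toReal_ofReal hc, ENNReal.toReal_ofReal, hwidth]
  · simp
  · rcases (Prod.fst '' K).eq_empty_or_nonempty with hempty | hne
    · simp [hempty]
    · have hcpt := hK.image continuous_fst
      exact sub_nonneg.2 (csInf_le_csSup hne hcpt.bddBelow hcpt.bddAbove)

def pairing (u : ℤ × ℤ) (x : ℝ × ℝ) : ℝ := x.1 * u.1 + x.2 * u.2

theorem latticeWidth_eq (u : ℤ × ℤ) (K : Set (ℝ × ℝ)) :
    latticeWidth u K = sSup (pairing u '' K) - sInf (pairing u '' K) := rfl

theorem isLinearMap_pairing (u : ℤ × ℤ) : IsLinearMap ℝ (pairing u) where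
  map_add x y := by simp only [pairing, Prod.fst_add, Prod.snd_add]; ring
  map_smul c x := by simp only [pairing, Prod.smul_fst, Prod.smul_snd, smul_eq_mul]; ring

theorem latticeWidth_convexHull {u : ℤ × ℤ} {F : Set (ℝ × ℝ)} {p q : ℝ × ℝ}
    (hp : p ∈ F) (hq : q ∈ F) (hmax : ∀ z ∈ F, pairing u z ≤ pairing u p)
    (hmin : ∀ z ∈ F, pairing u q ≤ pairing u z) :
    latticeWidth u (convexHull ℝ F) = pairing u p - pairing u q := by
  have hgreatest : IsGreatest (pairing u '' convexHull ℝ F) (pairing u p) :=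
    ⟨mem_image_of_mem _ (subset_convexHull ℝ F hp), forall_mem_image.2 fun _ hz =>
      convexHull_min hmax (convex_halfSpace_le (isLinearMap_pairing u) _) hz⟩
  have hleast : IsLeast (pairing u '' convexHull ℝ F) (pairing u q) :=
    ⟨mem_image_of_mem _ (subset_convexHull ℝ F hq), forall_mem_image.2 fun _ hz =>
      convexHull_min hmin (convex_halfSpace_ge (isLinearMap_pairing u) _) hz⟩
  rw [latticeWidth_eq, hgreatest.csSup_eq, hleast.csInf_eq]

theorem latticeWidth_image_linearMap {u u' : ℤ × ℤ} (L : (ℝ × ℝ) →ₗ[ℝ] ℝ × ℝ)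
    (h : ∀ z, pairing u (L z) = pairing u' z) (K : Set (ℝ × ℝ)) :
    latticeWidth u (L '' K) = latticeWidth u' K := by
  have : pairing u '' (L '' K) = pairing u' '' K := by
    rw [image_image]; exact image_congr fun z _ => h z
  rw [latticeWidth_eq, latticeWidth_eq, this]

theorem mixedArea_image_linearMap (L : (ℝ × ℝ) →ₗ[ℝ] ℝ × ℝ) (P Q : Set (ℝ × ℝ)) :
    mixedArea (L '' P) (L '' Q) = |LinearMap.det L| * mixedArea P Q := by
  simp only [mixedArea, ← image_add, Measure.addHaar_image_linearMap, ENNReal.toReal_mul,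
    ENNReal.toReal_ofReal (abs_nonneg _)]
  ring

theorem mixedArea_comm (P Q : Set (ℝ × ℝ)) : mixedArea P Q = mixedArea Q P := by
  rw [mixedArea, mixedArea, add_comm P Q]; ring

noncomputable def Matrix.toRealLin (A : Matrix (Fin 2) (Fin 2) ℤ) : (ℝ × ℝ) →ₗ[ℝ] ℝ × ℝ :=
  Matrix.toLin (Module.Basis.finTwoProd ℝ) (Module.Basis.finTwoProd ℝ) (A.map (↑))

theorem Matrix.toRealLin_apply (A : Matrix (Fin 2) (Fin 2) ℤ) (z : ℝ × ℝ) :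
    A.toRealLin z = (A 0 0 * z.1 + A 0 1 * z.2, A 1 0 * z.1 + A 1 1 * z.2) := by
  simp [Matrix.toRealLin, Matrix.toLin_apply, Matrix.mulVec, dotProduct, Fin.sum_univ_two]

theorem Matrix.det_toRealLin (A : Matrix (Fin 2) (Fin 2) ℤ) :
    LinearMap.det A.toRealLin = A.det := by
  rw [Matrix.toRealLin, LinearMap.det_toLin, Int.cast_det]

theorem Matrix.toRealLin_latticeEmbed (A : Matrix (Fin 2) (Fin 2) ℤ) (p : ℤ × ℤ) :
    A.toRealLin (latticeEmbed p) =
      latticeEmbed (Matrix.toLin (Module.Basis.finTwoProd ℤ) (Module.Basis.finTwoProd ℤ) A p) := by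
  simp [Matrix.toRealLin_apply, Matrix.toLin_apply, Matrix.mulVec, dotProduct, Fin.sum_univ_two,
    latticeEmbed]

theorem IsLatticePolytope.image_toRealLin {P : Set (ℝ × ℝ)} (hP : IsLatticePolytope P)
    (A : Matrix (Fin 2) (Fin 2) ℤ) : IsLatticePolytope (A.toRealLin '' P) := by
  obtain ⟨S, hS, rfl⟩ := hP
  refine ⟨S.image (Matrix.toLin (Module.Basis.finTwoProd ℤ) (Module.Basis.finTwoProd ℤ) A),
    hS.image _, ?_⟩
  rw [LinearMap.image_convexHull, Finset.coe_image, image_image, image_image]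
  simp only [Matrix.toRealLin_latticeEmbed]

theorem exists_det_eq_one_pairing_toRealLin {u : ℤ × ℤ} (hu : Int.gcd u.1 u.2 = 1) (t : ℤ) :
    ∃ A : Matrix (Fin 2) (Fin 2) ℤ, A.det = 1 ∧
      ∀ z, pairing u (A.toRealLin z) = pairing (1, t) z := by
  set α := Int.gcdA u.1 u.2
  set β := Int.gcdB u.1 u.2
  have hbezout : u.1 * α + u.2 * β = 1 := by rw [← Int.gcd_eq_gcd_ab, hu]; rfl
  have hbezoutℝ : (u.1 : ℝ) * α + u.2 * β = 1 := by exact_mod_cast hbezout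
  -- The first column is a Bézout vector of `u`, the second is chosen so that `Aᵀ u = (1, t)`.
  refine ⟨!![α, t * α - u.2; β, t * β + u.1], ?_, fun z => ?_⟩
  · rw [Matrix.det_fin_two_of]; linear_combination hbezout
  · simp only [pairing, Matrix.toRealLin_apply, Matrix.of_apply, Matrix.cons_val',
      Matrix.cons_val_zero, Matrix.cons_val_one, Matrix.empty_val', Matrix.cons_val_fin_one]
    push_cast
    linear_combination (z.1 + t * z.2) * hbezoutℝ

def Realizable (u : ℤ × ℤ) (w₁ w₂ v : ℝ) : Prop :=
  ∃ P Q : Set (ℝ × ℝ), IsLatticePolytope P ∧ IsLatticePolytope Q ∧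
    latticeWidth u P = w₁ ∧ latticeWidth u Q = w₂ ∧ mixedArea P Q = v

theorem Realizable.swap {u : ℤ × ℤ} {w₁ w₂ v : ℝ} (h : Realizable u w₁ w₂ v) :
    Realizable u w₂ w₁ v := by
  obtain ⟨P, Q, hP, hQ, hwP, hwQ, hv⟩ := h
  exact ⟨Q, P, hQ, hP, hwQ, hwP, mixedArea_comm Q P ▸ hv⟩

theorem Realizable.of_toRealLin {u u' : ℤ × ℤ} {w₁ w₂ v : ℝ} (A : Matrix (Fin 2) (Fin 2) ℤ)
    (hA : |A.det| = 1) (hpairing : ∀ z, pairing u (A.toRealLin z) = pairing u' z)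
    (h : Realizable u' w₁ w₂ v) : Realizable u w₁ w₂ v := by
  obtain ⟨P, Q, hP, hQ, hwP, hwQ, hv⟩ := h
  have hdet : |LinearMap.det A.toRealLin| = 1 := by
    rw [Matrix.det_toRealLin]; exact_mod_cast hA
  refine ⟨_, _, hP.image_toRealLin A, hQ.image_toRealLin A, ?_, ?_, ?_⟩
  · rwa [latticeWidth_image_linearMap _ hpairing]
  · rwa [latticeWidth_image_linearMap _ hpairing]
  · rw [mixedArea_image_linearMap, hdet, one_mul, hv]

theorem Realizable.of_gcd_eq_one {u : ℤ × ℤ} (hu : Int.gcd u.1 u.2 = 1) {t : ℤ} {w₁ w₂ v : ℝ}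
    (h : Realizable (1, t) w₁ w₂ v) : Realizable u w₁ w₂ v := by
  obtain ⟨A, hA, hpairing⟩ := exists_det_eq_one_pairing_toRealLin hu t
  exact h.of_toRealLin A (by rw [hA, abs_one]) hpairing

theorem convexHull_latticeEmbed_vertical_unit :
    convexHull ℝ (latticeEmbed '' ↑({(0, 0), (0, 1)} : Finset (ℤ × ℤ))) =
      {(0 : ℝ)} ×ˢ Icc (0 : ℝ) 1 := by
  rw [singleton_prod, ← segment_eq_Icc (𝕜 := ℝ) zero_le_one,
    Prod.image_mk_segment_right (𝕜 := ℝ), ← convexHull_pair]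
  simp [latticeEmbed, image_insert_eq]

/-- `P` is the vertical unit segment and `Q` the triangle `conv {(r, 0), (0, k), (v, m)}`; the
bounds on `m` keep the third vertex in the strip `-w k ≤ x - w y ≤ r`. -/
theorem realizable_segment_triangle {w r k m v : ℕ} (hrv : r ≤ v) (hlow : w * m ≤ v + w * k)
    (hhigh : v ≤ r + w * m) : Realizable (1, -(w : ℤ)) w (r + w * k : ℕ) v := by
  have hlowℝ : (w : ℝ) * m ≤ v + w * k := by exact_mod_cast hlow
  have hhighℝ : (v : ℝ) ≤ r + w * m := by exact_mod_cast hhigh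
  have hrvℝ : (r : ℝ) ≤ v := by exact_mod_cast hrv
  set T : Finset (ℤ × ℤ) := {((r : ℤ), 0), (0, (k : ℤ)), ((v : ℤ), (m : ℤ))}
  have hT : latticeEmbed '' ↑T = {((r : ℝ), 0), (0, (k : ℝ)), ((v : ℝ), (m : ℝ))} := by
    simp [T, latticeEmbed, image_insert_eq]
  have hQ : IsCompact (convexHull ℝ (latticeEmbed '' ↑T)) :=
    (T.finite_toSet.image _).isCompact_convexHull ℝ
  refine ⟨_, _, ⟨{(0, 0), (0, 1)}, by simp, rfl⟩, ⟨T, by simp [T], rfl⟩, ?_, ?_, ?_⟩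
  · rw [show latticeEmbed '' _ = {((0 : ℝ), (0 : ℝ)), (0, 1)} by
        simp [latticeEmbed, image_insert_eq],
      latticeWidth_convexHull (p := ((0 : ℝ), (0 : ℝ))) (q := (0, 1)) (by simp) (by simp)]
    · simp [pairing]
    · rintro z (rfl | rfl) <;> simp [pairing]
    · rintro z (rfl | rfl) <;> simp [pairing]
  · rw [hT, latticeWidth_convexHull (p := ((r : ℝ), 0)) (q := (0, (k : ℝ))) (by simp) (by simp)]
    · simp [pairing]; ring
    · rintro z (rfl | rfl | rfl) <;> simp [pairing] <;> linarith
    · rintro z (rfl | rfl | rfl) <;> simp [pairing] <;> linarith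
  · rw [convexHull_latticeEmbed_vertical_unit,
      mixedArea_vertical_segment hQ (convex_convexHull ℝ _) zero_le_one, one_mul, hT,
      latticeWidth_convexHull (p := ((v : ℝ), (m : ℝ))) (q := (0, (k : ℝ))) (by simp) (by simp)]
    · simp [pairing]
    · rintro z (rfl | rfl | rfl) <;> simp [pairing, hrvℝ]
    · rintro z (rfl | rfl | rfl) <;> simp [pairing]

theorem Nat.min_mod_mod_of_le {a b : ℕ} (ha : 0 < a) (hab : a ≤ b) :
    min (a % b) (b % a) = b % a := by
  rcases hab.eq_or_lt with rfl | hlt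
  · simp
  · rw [Nat.mod_eq_of_lt hlt]
    exact min_eq_right (Nat.mod_lt b ha).le

theorem realizable_of_mod_le {u : ℤ × ℤ} (hu : Int.gcd u.1 u.2 = 1) {w₁ w₂ v : ℕ} (hw₁ : 0 < w₁)
    (hle : w₁ ≤ w₂) (hv : w₂ % w₁ ≤ v) : Realizable u w₁ w₂ v := by
  have hk : w₁ ≤ w₁ * (w₂ / w₁) := Nat.le_mul_of_pos_right w₁ (Nat.div_pos hle hw₁)
  have hlow : w₁ * (v / w₁ + 1) ≤ v + w₁ * (w₂ / w₁) := by
    rw [mul_add_one]; linarith [Nat.mul_div_le v w₁]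
  have hhigh : v ≤ w₂ % w₁ + w₁ * (v / w₁ + 1) :=
    (Nat.lt_mul_div_succ v hw₁).le.trans (Nat.le_add_left _ _)
  have h := realizable_segment_triangle hv hlow hhigh
  rw [Nat.mod_add_div] at h
  exact h.of_gcd_eq_one hu

/-- Saturation part of the discrete diagram: for positive widths `w₁, w₂`, every
non-negative integer `v ≥ min{w₁ mod w₂, w₂ mod w₁}` is realized as a mixed area. -/
theorem diagram_saturation (w₁ w₂ : ℕ) (hw₁ : 0 < w₁) (hw₂ : 0 < w₂)
    (v : ℕ) (hv : min (w₁ % w₂) (w₂ % w₁) ≤ v)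
    (u : ℤ × ℤ) (hu : Int.gcd u.1 u.2 = 1) :
    ∃ P Q : Set (ℝ × ℝ), IsLatticePolytope P ∧ IsLatticePolytope Q ∧
      latticeWidth u P = (w₁ : ℝ) ∧ latticeWidth u Q = (w₂ : ℝ) ∧
      mixedArea P Q = (v : ℝ) := by
  rcases le_total w₁ w₂ with hle | hle
  · rw [Nat.min_mod_mod_of_le hw₁ hle] at hv
    exact realizable_of_mod_le hu hw₁ hle hv
  · rw [min_comm, Nat.min_mod_mod_of_le hw₂ hle] at hv
    exact (realizable_of_mod_le hu hw₂ hle hv).swap
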